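/- arXiv:2602.09627 — 2 statements merged into one kernel-verified Lean document; each statement's English description precedes it below -/
import Mathlib

section
/- Nonadaptive composition privacy bound: let μ be a product distribution on databases of size n, F = (F₁,…,F_m) a nonadaptive composition of m queries answered on the blocks of a uniform injective (n₁,…,n_m)-random partition T with n₁+···+n_m = n. Then for the critical entry j, D_ε(μ_{j,v} K_T K_F, μ_{j,w} K_T K_F) ≤ ∑_{k=1}^m (n_k/n) · E_{τ ∼ T | j∈block k}[ D_ε(μ_{j,v} K_{τ^k} K_{F_k}, μ_{j,w} K_{τ^k} K_{F_k}) ] for all v, w ∈ W and ε ≥ 0. -/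
/-- Hockey-stick divergence (privacy curve) of two distributions on a finite set. -/
noncomputable def hsDiv {A : Type*} [Fintype A] (ε : ℝ) (p q : A → ℝ) : ℝ :=
  ∑ a, max 0 (p a - Real.exp ε * q a)

/-- `p` is a probability mass function on a finite set. -/
def IsPMF {A : Type*} [Fintype A] (p : A → ℝ) : Prop :=
  (∀ a, 0 ≤ p a) ∧ ∑ a, p a = 1

/-- Pushforward of a distribution through a Markov kernel. -/
noncomputable def pushKer {X A : Type*} [Fintype X] (μ : X → ℝ) (K : X → A → ℝ) : A → ℝ :=
  fun a => ∑ x, μ x * K x a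

noncomputable def condProd {W : Type*} [Fintype W] [DecidableEq W] {n : ℕ}
    (μi : Fin n → W → ℝ) (j : Fin n) (v : W) : (Fin n → W) → ℝ :=
  fun D => ∏ i, if i = j then (if D i = v then (1 : ℝ) else 0) else μi i (D i)

/-- Injective templates of format `nk` partitioning `Fin n`, given as block-assignment
functions with prescribed block sizes. -/
def partitions (n m : ℕ) (nk : Fin m → ℕ) : Finset (Fin n → Fin m) :=
  Finset.univ.filter (fun f => ∀ k, (Finset.univ.filter (fun i => f i = k)).card = nk k)

/-!
For a fixed template `f`, block `k` reads only the coordinates in `f⁻¹' {k}`, and these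
are independent under the product law `condProd μi j u`. So the joint output is the output
of block `f j` times a factor that does not depend on `u`; since that factor is a conditional
probability, it leaves the hockey-stick divergence unchanged, and only block `f j` counts.
Joint convexity of `hsDiv` bounds the divergence of the mixture over templates by the average
of these terms. Grouping templates by the block of `j`, a transposition argument and double
counting show that `j` lies in block `k` for a fraction `n_k / n` of them.
-/

open Finset Function

section ProductWeight

variable {ι W : Type*}

lemma prod_piecewise_mul_prod_piecewise [Fintype ι] {F G : ι → W → ℝ} {s : Set ι}
    [∀ i, Decidable (i ∈ s)] (hFG : ∀ i ∈ s, F i = G i) (D D' : ι → W) :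
    (∏ i, F i (s.piecewise D D' i)) * ∏ i, G i (s.piecewise D' D i)
      = (∏ i, G i (D i)) * ∏ i, F i (D' i) := by
  simp_rw [← prod_mul_distrib]
  refine prod_congr rfl fun i _ => ?_
  by_cases hi : i ∈ s
  · simp [hi, hFG i hi]
  · simp [hi, mul_comm]

variable [Fintype ι] [DecidableEq ι] [Fintype W]

lemma sum_sum_piecewise_swap (s : Set ι) [∀ i, Decidable (i ∈ s)]
    (φ : (ι → W) → (ι → W) → ℝ) :
    ∑ D, ∑ D', φ (s.piecewise D D') (s.piecewise D' D) = ∑ D, ∑ D', φ D D' := by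
  have hswap : Involutive fun P : (ι → W) × (ι → W) =>
      (s.piecewise P.1 P.2, s.piecewise P.2 P.1) := by
    rintro ⟨D, D'⟩
    ext i <;> by_cases hi : i ∈ s <;> simp [hi]
  rw [← Fintype.sum_prod_type', ← Fintype.sum_prod_type']
  exact Equiv.sum_comp (hswap.toPerm _) fun P => φ P.1 P.2

lemma sum_prod_eq_one {F : ι → W → ℝ} (hF : ∀ i, ∑ x, F i x = 1) :
    ∑ D : ι → W, ∏ i, F i (D i) = 1 := by
  rw [← Fintype.prod_sum]
  exact prod_eq_one fun i _ => hF i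

lemma sum_prod_mul_mul_eq_of_dependsOn {F : ι → W → ℝ} (hF : ∀ i, ∑ x, F i x = 1)
    {s : Set ι} {g h : (ι → W) → ℝ} (hg : DependsOn g s) (hh : DependsOn h sᶜ) :
    ∑ D, (∏ i, F i (D i)) * (g D * h D)
      = (∑ D, (∏ i, F i (D i)) * g D) * ∑ D, (∏ i, F i (D i)) * h D := by
  classical
  -- Take two independent samples and exchange their `s`-coordinates.
  set w : (ι → W) → ℝ := fun D => ∏ i, F i (D i)
  calc ∑ D, w D * (g D * h D)
      = ∑ D, ∑ D', w D * (g D * h D) * w D' := by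
        rw [← sum_mul_sum, sum_prod_eq_one hF, mul_one]
    _ = ∑ D, ∑ D', w (s.piecewise D D') * (g (s.piecewise D D') * h (s.piecewise D D'))
          * w (s.piecewise D' D) :=
        (sum_sum_piecewise_swap s fun D D' => w D * (g D * h D) * w D').symm
    _ = ∑ D, ∑ D', w D * g D * (w D' * h D') := by
        refine sum_congr rfl fun D _ => sum_congr rfl fun D' _ => ?_
        rw [show g (s.piecewise D D') = g D from hg fun i hi => by simp [hi],
          show h (s.piecewise D D') = h D' from
            hh fun i hi => by simp [Set.notMem_of_mem_compl hi]]
        linear_combination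
          g D * h D' * prod_piecewise_mul_prod_piecewise (s := s) (G := F) (fun _ _ => rfl) D D'
    _ = _ := by rw [sum_mul_sum]

lemma sum_prod_mul_eq_of_dependsOn {F G : ι → W → ℝ} (hF : ∀ i, ∑ x, F i x = 1)
    (hG : ∀ i, ∑ x, G i x = 1) {s : Set ι} (hFG : ∀ i ∈ s, F i = G i) {h : (ι → W) → ℝ}
    (hh : DependsOn h s) :
    ∑ D, (∏ i, F i (D i)) * h D = ∑ D, (∏ i, G i (D i)) * h D := by
  classical
  set wF : (ι → W) → ℝ := fun D => ∏ i, F i (D i)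
  set wG : (ι → W) → ℝ := fun D => ∏ i, G i (D i)
  calc ∑ D, wF D * h D
      = ∑ D, ∑ D', wF D * h D * wG D' := by
        rw [← sum_mul_sum, sum_prod_eq_one hG, mul_one]
    _ = ∑ D, ∑ D', wF (s.piecewise D D') * h (s.piecewise D D') * wG (s.piecewise D' D) :=
        (sum_sum_piecewise_swap s fun D D' => wF D * h D * wG D').symm
    _ = ∑ D, ∑ D', wG D * h D * wF D' := by
        refine sum_congr rfl fun D _ => sum_congr rfl fun D' _ => ?_
        rw [show h (s.piecewise D D') = h D from hh fun i hi => by simp [hi]]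
        linear_combination h D * prod_piecewise_mul_prod_piecewise hFG D D'
    _ = ∑ D, wG D * h D := by rw [← sum_mul_sum, sum_prod_eq_one hF, mul_one]

end ProductWeight

section HockeyStick

variable {A : Type*} [Fintype A] (ε : ℝ)

lemma hsDiv_const_mul {c : ℝ} (hc : 0 ≤ c) (p q : A → ℝ) :
    hsDiv ε (fun a => c * p a) (fun a => c * q a) = c * hsDiv ε p q := by
  simp only [hsDiv, mul_sum]
  refine sum_congr rfl fun a _ => ?_
  rw [mul_max_of_nonneg _ _ hc, mul_zero, mul_sub, mul_left_comm]

lemma hsDiv_sum_le {ι : Type*} (s : Finset ι) (p q : ι → A → ℝ) :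
    hsDiv ε (fun a => ∑ i ∈ s, p i a) (fun a => ∑ i ∈ s, q i a)
      ≤ ∑ i ∈ s, hsDiv ε (p i) (q i) := by
  simp only [hsDiv]
  rw [sum_comm]
  gcongr with a
  rw [mul_sum, ← sum_sub_distrib]
  exact max_le (sum_nonneg fun i _ => le_max_left _ _) (sum_le_sum fun i _ => le_max_right _ _)

/-- `hR` says that on every fibre `{a | a k₀ = b}` the weights `R` form a probability. -/
lemma hsDiv_mul_of_marginal {ι : Type*} [Fintype ι] [DecidableEq ι] (k₀ : ι) (p q : A → ℝ)
    {R : (ι → A) → ℝ} (hR₀ : ∀ a, 0 ≤ R a)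
    (hR : ∀ φ : A → ℝ, ∑ a, R a * φ (a k₀) = ∑ b, φ b) :
    hsDiv ε (fun a => p (a k₀) * R a) (fun a => q (a k₀) * R a) = hsDiv ε p q := by
  rw [hsDiv, hsDiv, ← hR]
  refine sum_congr rfl fun a _ => ?_
  rw [mul_max_of_nonneg _ _ (hR₀ a), mul_zero]
  ring_nf

end HockeyStick

lemma sum_prod_compl_mul_apply {ι A : Type*} [Fintype ι] [DecidableEq ι] [Fintype A]
    {κ : ι → A → ℝ} (hκ : ∀ k, ∑ x, κ k x = 1) (k₀ : ι) (φ : A → ℝ) :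
    ∑ a : ι → A, (∏ k ∈ {k₀}ᶜ, κ k (a k)) * φ (a k₀) = ∑ b, φ b := by
  have hupdate : ∀ a : ι → A,
      (∏ k ∈ {k₀}ᶜ, κ k (a k)) * φ (a k₀) = ∏ k, update κ k₀ φ k (a k) := by
    intro a
    rw [Fintype.prod_eq_mul_prod_compl k₀, update_self, mul_comm]
    congr 1
    exact prod_congr rfl fun k hk => by rw [update_of_ne (by simpa using hk)]
  simp_rw [hupdate, ← Fintype.prod_sum, Fintype.prod_eq_mul_prod_compl k₀, update_self]
  rw [prod_eq_one fun k hk => by rw [update_of_ne (by simpa using hk), hκ], mul_one]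

section Composition

variable {W A : Type*} [Fintype W] [DecidableEq W] {n m : ℕ} {μi : Fin n → W → ℝ}

lemma condProd_eq_prod (μi : Fin n → W → ℝ) (j : Fin n) (u : W) :
    condProd μi j u = fun D => ∏ i, update μi j (Pi.single u 1) i (D i) := by
  ext D
  refine prod_congr rfl fun i _ => ?_
  by_cases hi : i = j
  · subst hi; simp [Pi.single_apply]
  · simp [hi]

lemma sum_update_single_eq_one (hμi : ∀ i, IsPMF (μi i)) (j : Fin n) (u : W) (i : Fin n) :
    ∑ x, update μi j (Pi.single u 1) i x = 1 := by
  by_cases hi : i = j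
  · subst hi; simp
  · simp [hi, (hμi i).2]

lemma isPMF_condProd (hμi : ∀ i, IsPMF (μi i)) (j : Fin n) (u : W) :
    IsPMF (condProd μi j u) := by
  refine ⟨fun D => prod_nonneg fun i _ => ?_, ?_⟩
  · by_cases hi : i = j
    · subst hi; by_cases hD : D i = u <;> simp [hD]
    · simpa [hi] using (hμi i).1 (D i)
  · rw [condProd_eq_prod]
    exact sum_prod_eq_one (sum_update_single_eq_one hμi j u)

variable {f : Fin n → Fin m} {K : Fin m → (Fin n → W) → A → ℝ}

/-- The blocks other than `f j` read only coordinates other than `j`, independent of block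
`f j`; hence their joint output factors off and does not see the value fixed at `j`. -/
lemma sum_condProd_mul_prod_eq (hμi : ∀ i, IsPMF (μi i))
    (hdep : ∀ k, DependsOn (K k) {i | f i = k}) (j : Fin n) (u u' : W) (a : Fin m → A) :
    ∑ D, condProd μi j u D * ∏ k, K k D (a k)
      = pushKer (condProd μi j u) (K (f j)) (a (f j))
        * ∑ D, condProd μi j u' D * ∏ k ∈ {f j}ᶜ, K k D (a k) := by
  have hg : DependsOn (fun D => K (f j) D (a (f j))) {i | f i = f j} :=
    fun D D' h => congrFun (hdep (f j) h) _
  have hh : DependsOn (fun D => ∏ k ∈ {f j}ᶜ, K k D (a k)) {i | f i = f j}ᶜ :=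
    fun D D' h => prod_congr rfl fun k hk => congrFun (hdep k fun i hi => h i fun hfi =>
      (by simpa using hk : k ≠ f j) ((hi : f i = k).symm.trans hfi)) _
  have hh' : DependsOn (fun D => ∏ k ∈ {f j}ᶜ, K k D (a k)) {j}ᶜ :=
    hh.mono fun i hi => by rintro rfl; exact hi rfl
  simp only [pushKer, condProd_eq_prod, Fintype.prod_eq_mul_prod_compl (f j)]
  rw [sum_prod_mul_mul_eq_of_dependsOn (sum_update_single_eq_one hμi j u) hg hh,
    sum_prod_mul_eq_of_dependsOn (sum_update_single_eq_one hμi j u)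
      (sum_update_single_eq_one hμi j u') (fun i hi => by rw [update_of_ne hi, update_of_ne hi])
      hh']

lemma hsDiv_composition_eq_hsDiv_block [Fintype A] (hμi : ∀ i, IsPMF (μi i))
    (hK : ∀ k D, IsPMF (K k D)) (hdep : ∀ k, DependsOn (K k) {i | f i = k}) (ε : ℝ) (j : Fin n)
    (v w : W) :
    hsDiv ε (fun a : Fin m → A => ∑ D, condProd μi j v D * ∏ k, K k D (a k))
        (fun a => ∑ D, condProd μi j w D * ∏ k, K k D (a k))
      = hsDiv ε (pushKer (condProd μi j v) (K (f j))) (pushKer (condProd μi j w) (K (f j))) := by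
  simp_rw [sum_condProd_mul_prod_eq hμi hdep j _ v]
  refine hsDiv_mul_of_marginal ε (f j) _ _
    (R := fun a => ∑ D, condProd μi j v D * ∏ k ∈ {f j}ᶜ, K k D (a k))
    (fun a => ?_) (fun φ => ?_)
  · exact sum_nonneg fun D _ => mul_nonneg ((isPMF_condProd hμi j v).1 D)
      (prod_nonneg fun k _ => (hK k D).1 _)
  · calc ∑ a : Fin m → A, (∑ D, condProd μi j v D * ∏ k ∈ {f j}ᶜ, K k D (a k)) * φ (a (f j))
        = ∑ D, condProd μi j v D
            * ∑ a : Fin m → A, (∏ k ∈ {f j}ᶜ, K k D (a k)) * φ (a (f j)) := by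
          simp_rw [sum_mul, mul_assoc, mul_sum]
          exact sum_comm
      _ = ∑ D, condProd μi j v D * ∑ b, φ b :=
          sum_congr rfl fun D _ => by rw [sum_prod_compl_mul_apply fun k => (hK k D).2]
      _ = ∑ b, φ b := by rw [← sum_mul, (isPMF_condProd hμi j v).2, one_mul]

end Composition

section Partitions

variable {n m : ℕ} {nk : Fin m → ℕ}

lemma comp_perm_mem_partitions {f : Fin n → Fin m} (e : Equiv.Perm (Fin n))
    (hf : f ∈ partitions n m nk) : f ∘ e ∈ partitions n m nk := by
  simp only [partitions, mem_filter, mem_univ, true_and] at hf ⊢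
  intro k
  rw [← hf k]
  exact card_equiv e fun i => by simp

lemma card_filter_partitions_apply_eq (i j : Fin n) (k : Fin m) :
    #{f ∈ partitions n m nk | f i = k} = #{f ∈ partitions n m nk | f j = k} := by
  refine card_nbij' (· ∘ Equiv.swap i j) (· ∘ Equiv.swap i j) ?_ ?_ ?_ ?_
  all_goals
    intro f hf
    simp only [coe_filter, Set.mem_ofPred_eq] at hf ⊢
  · exact ⟨comp_perm_mem_partitions _ hf.1, by simpa using hf.2⟩
  · exact ⟨comp_perm_mem_partitions _ hf.1, by simpa using hf.2⟩
  · ext; simp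
  · ext; simp

lemma mul_card_filter_partitions_eq (j : Fin n) (k : Fin m) :
    n * #{f ∈ partitions n m nk | f j = k} = nk k * #(partitions n m nk) := by
  calc n * #{f ∈ partitions n m nk | f j = k}
      = ∑ i, #{f ∈ partitions n m nk | f i = k} := by
        simp [card_filter_partitions_apply_eq _ j]
    _ = ∑ f ∈ partitions n m nk, #{i | f i = k} :=
        sum_card_bipartiteAbove_eq_sum_card_bipartiteBelow
          fun (i : Fin n) (f : Fin n → Fin m) => f i = k
    _ = nk k * #(partitions n m nk) := by
        rw [sum_congr rfl fun f (hf : f ∈ partitions n m nk) => (mem_filter.mp hf).2 k,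
          sum_const, smul_eq_mul, mul_comm]

end Partitions

lemma inv_card_partitions_mul_sum_filter {n m : ℕ} {nk : Fin m → ℕ} (j : Fin n) (k : Fin m)
    (φ : (Fin n → Fin m) → ℝ) :
    (#(partitions n m nk) : ℝ)⁻¹ * ∑ f ∈ partitions n m nk with f j = k, φ f
      = (nk k / n) * ((#{f ∈ partitions n m nk | f j = k} : ℝ)⁻¹
          * ∑ f ∈ partitions n m nk with f j = k, φ f) := by
  rcases eq_or_ne #{f ∈ partitions n m nk | f j = k} 0 with hk | hk
  · simp [card_eq_zero.mp hk]
  have hP : (#(partitions n m nk) : ℝ) ≠ 0 :=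
    Nat.cast_ne_zero.mpr (pos_iff_ne_zero.mp (hk.bot_lt.trans_le (card_filter_le _ _)))
  have hn : (n : ℝ) ≠ 0 := Nat.cast_ne_zero.mpr j.pos.ne'
  have hcount : (n : ℝ) * #{f ∈ partitions n m nk | f j = k} = nk k * #(partitions n m nk) := by
    exact_mod_cast mul_card_filter_partitions_eq j k
  rw [← mul_assoc]
  congr 1
  field_simp
  linarith

theorem nonadaptive_composition_bound_general
    {W A : Type*} [Fintype W] [DecidableEq W] [Fintype A]
    {n m : ℕ} (nk : Fin m → ℕ)
    (μi : Fin n → W → ℝ) (hμi : ∀ i, IsPMF (μi i))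
    (K : (Fin n → Fin m) → Fin m → (Fin n → W) → A → ℝ)
    (hK : ∀ f k D, IsPMF (K f k D))
    (hdep : ∀ f k (D D' : Fin n → W), (∀ i, f i = k → D i = D' i) → K f k D = K f k D')
    (j : Fin n) (v w : W) (ε : ℝ) :
    hsDiv ε
      (fun a : Fin m → A => ((partitions n m nk).card : ℝ)⁻¹ *
        ∑ f ∈ partitions n m nk, ∑ D : Fin n → W, condProd μi j v D * ∏ k, K f k D (a k))
      (fun a : Fin m → A => ((partitions n m nk).card : ℝ)⁻¹ *
        ∑ f ∈ partitions n m nk, ∑ D : Fin n → W, condProd μi j w D * ∏ k, K f k D (a k))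
      ≤ ∑ k, ((nk k : ℝ) / n) *
          ((((partitions n m nk).filter (fun f => f j = k)).card : ℝ)⁻¹ *
            ∑ f ∈ (partitions n m nk).filter (fun f => f j = k),
              hsDiv ε (pushKer (condProd μi j v) (K f k))
                      (pushKer (condProd μi j w) (K f k))) := by
  refine (hsDiv_const_mul ε (by positivity) _ _).trans_le <|
    (mul_le_mul_of_nonneg_left (hsDiv_sum_le ε _ _ _) (by positivity)).trans_eq ?_
  rw [sum_congr rfl fun f _ => hsDiv_composition_eq_hsDiv_block hμi (hK f) (hdep f) ε j v w,
    ← sum_fiberwise (partitions n m nk) (· j), mul_sum]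
  refine sum_congr rfl fun k _ => ?_
  rw [← inv_card_partitions_mul_sum_filter]
  exact congrArg _ (sum_congr rfl fun f hf => by rw [(mem_filter.mp hf).2])

theorem nonadaptive_composition_bound
    {W A : Type*} [Fintype W] [DecidableEq W] [Fintype A]
    {n m : ℕ} (nk : Fin m → ℕ) (hsum : ∑ k, nk k = n) (hn : 0 < n)
    (μi : Fin n → W → ℝ) (hμi : ∀ i, IsPMF (μi i))
    (K : (Fin n → Fin m) → Fin m → (Fin n → W) → A → ℝ)
    (hK : ∀ f k D, IsPMF (K f k D))
    (hdep : ∀ f k (D D' : Fin n → W), (∀ i, f i = k → D i = D' i) → K f k D = K f k D')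
    (j : Fin n) (v w : W) (ε : ℝ) (hε : 0 ≤ ε) :
    hsDiv ε
      (fun a : Fin m → A => ((partitions n m nk).card : ℝ)⁻¹ *
        ∑ f ∈ partitions n m nk, ∑ D : Fin n → W, condProd μi j v D * ∏ k, K f k D (a k))
      (fun a : Fin m → A => ((partitions n m nk).card : ℝ)⁻¹ *
        ∑ f ∈ partitions n m nk, ∑ D : Fin n → W, condProd μi j w D * ∏ k, K f k D (a k))
      ≤ ∑ k, ((nk k : ℝ) / n) *
          ((((partitions n m nk).filter (fun f => f j = k)).card : ℝ)⁻¹ *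
            ∑ f ∈ (partitions n m nk).filter (fun f => f j = k),
              hsDiv ε (pushKer (condProd μi j v) (K f k))
                      (pushKer (condProd μi j w) (K f k))) :=
  nonadaptive_composition_bound_general nk μi hμi K hK hdep j v w ε
end

section
/- Adaptive composition bound (fixed template, two rounds): let μ be a product distribution on W^n, τ an injective template with two disjoint blocks, the critical index j in block 2, and let F₁ act on block 1 and F₂(a₁) on block 2 adaptively depending on the first answer a₁. Then for all v, w and ε ≥ 0: D_ε(joint output under μ_{j,v}, joint output under μ_{j,w}) ≤ ∑_{a₁∈A} (μ K_{τ¹} K_{F₁})(a₁) · D_ε(μ_{j,v} K_{τ²} K_{F₂(a₁)}, μ_{j,w} K_{τ²} K_{F₂(a₁)}). -/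
/-!
Write `E_ν` for expectation under the product measure `∏ i, ν i`. Swapping the `S`-coordinates of
two independent samples `D, D'` shows `E_ν[f] · E_ν'[g] = E_κ[f g]` for `f` depending on `S`,
`g` depending on `Sᶜ` and `κ = S.piecewise ν ν'`. Conditioning on `D j = v` only changes the factor
at `j ∉ τ₁`, so the joint output law factors as `P(a₁) · Q_v(a₁)(a₂)` with `P` the (unconditioned)
law of the first answer; the hockey-stick divergence of two such laws sharing the first factor is
the `P`-average of the divergences of the second factors. The bound even holds with equality.
-/

open Finset Function

section ProductMeasure

variable {ι W : Type*} [Fintype ι] [DecidableEq ι] [Fintype W]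

lemma sum_prod_mul_sum_prod_of_dependsOn (ν ν' : ι → W → ℝ) (S : Finset ι)
    (hν : ∀ i ∉ S, ∑ x, ν i x = 1) (hν' : ∀ i ∈ S, ∑ x, ν' i x = 1)
    {f g : (ι → W) → ℝ} (hf : DependsOn f S) (hg : DependsOn g (↑S)ᶜ) :
    (∑ D : ι → W, (∏ i, ν i (D i)) * f D) * (∑ D : ι → W, (∏ i, ν' i (D i)) * g D)
      = ∑ D : ι → W, (∏ i, S.piecewise ν ν' i (D i)) * (f D * g D) := by
  set swap : (ι → W) × (ι → W) → (ι → W) × (ι → W) :=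
    fun p => (S.piecewise p.1 p.2, S.piecewise p.2 p.1)
  have hswap : Involutive swap := by
    rintro ⟨D, D'⟩
    refine Prod.ext ?_ ?_ <;> funext i <;> by_cases hi : i ∈ S <;> simp [swap, hi]
  have hweight : ∀ D D' : ι → W,
      (∏ i, ν i (S.piecewise D D' i)) * (∏ i, ν' i (S.piecewise D' D i))
        = (∏ i, S.piecewise ν ν' i (D i)) * (∏ i, S.piecewise ν' ν i (D' i)) := by
    intro D D'
    simp only [← prod_mul_distrib]
    exact prod_congr rfl fun i _ => by by_cases hi : i ∈ S <;> simp [hi, mul_comm]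
  have hmass : ∑ D : ι → W, ∏ i, S.piecewise ν' ν i (D i) = 1 := by
    rw [← Fintype.prod_sum]
    exact prod_eq_one fun i _ => by by_cases hi : i ∈ S <;> simp [hi, hν, hν']
  calc (∑ D : ι → W, (∏ i, ν i (D i)) * f D) * (∑ D : ι → W, (∏ i, ν' i (D i)) * g D)
      = ∑ p : (ι → W) × (ι → W), (∏ i, ν i (p.1 i)) * f p.1 * ((∏ i, ν' i (p.2 i)) * g p.2) := by
        rw [sum_mul_sum, Fintype.sum_prod_type]
    _ = ∑ p : (ι → W) × (ι → W), (∏ i, ν i ((swap p).1 i)) * f (swap p).1 *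
          ((∏ i, ν' i ((swap p).2 i)) * g (swap p).2) :=
        (Equiv.sum_comp hswap.toPerm _).symm
    _ = ∑ p : (ι → W) × (ι → W), (∏ i, S.piecewise ν ν' i (p.1 i)) * (f p.1 * g p.1) *
          ∏ i, S.piecewise ν' ν i (p.2 i) := by
        refine sum_congr rfl fun ⟨D, D'⟩ _ => ?_
        have hfD : f (S.piecewise D D') = f D := hf fun i hi => S.piecewise_eq_of_mem _ _ hi
        have hgD : g (S.piecewise D' D) = g D := hg fun i hi => S.piecewise_eq_of_notMem _ _ hi
        simp only [swap, hfD, hgD]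
        linear_combination f D * g D * hweight D D'
    _ = ∑ D : ι → W, (∏ i, S.piecewise ν ν' i (D i)) * (f D * g D) := by
        simp only [Fintype.sum_prod_type, ← mul_sum, hmass, mul_one]

end ProductMeasure

lemma hsDiv_mul_fiberwise {A B : Type*} [Fintype A] [Fintype B] (ε : ℝ) {m : A → ℝ}
    (hm : ∀ a, 0 ≤ m a) (q q' : A → B → ℝ) :
    hsDiv ε (fun p : A × B => m p.1 * q p.1 p.2) (fun p : A × B => m p.1 * q' p.1 p.2)
      = ∑ a, m a * hsDiv ε (q a) (q' a) := by
  simp only [hsDiv, Fintype.sum_prod_type, mul_sum]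
  refine sum_congr rfl fun a _ => sum_congr rfl fun b _ => ?_
  rw [mul_max_of_nonneg _ _ (hm a), mul_zero]
  ring_nf

lemma condProd_eq_prod_update {W : Type*} [Fintype W] [DecidableEq W] {n : ℕ}
    (μi : Fin n → W → ℝ) (j : Fin n) (v : W) (D : Fin n → W) :
    condProd μi j v D = ∏ i, update μi j (Pi.single v 1) i (D i) :=
  prod_congr rfl fun i _ => by by_cases hi : i = j <;> simp [hi, Pi.single_apply]

theorem adaptive_two_round_fixed_template_bound_general
    {W A : Type*} [Fintype W] [DecidableEq W] [Fintype A]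
    {n : ℕ}
    (μi : Fin n → W → ℝ) (hμi : ∀ i, IsPMF (μi i))
    (τ₁ τ₂ : Finset (Fin n)) (hdisj : Disjoint τ₁ τ₂)
    (j : Fin n) (hj : j ∈ τ₂)
    (G₁ : (Fin n → W) → A → ℝ) (hG₁ : ∀ D, IsPMF (G₁ D))
    (hdep₁ : ∀ (D D' : Fin n → W), (∀ i ∈ τ₁, D i = D' i) → G₁ D = G₁ D')
    (G₂ : A → (Fin n → W) → A → ℝ)
    (hdep₂ : ∀ (a₁ : A) (D D' : Fin n → W), (∀ i ∈ τ₂, D i = D' i) → G₂ a₁ D = G₂ a₁ D')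
    (v w : W) (ε : ℝ) :
    hsDiv ε
      (fun p : A × A => ∑ D : Fin n → W, condProd μi j v D * (G₁ D p.1 * G₂ p.1 D p.2))
      (fun p : A × A => ∑ D : Fin n → W, condProd μi j w D * (G₁ D p.1 * G₂ p.1 D p.2))
      ≤ ∑ a₁ : A, pushKer (fun D : Fin n → W => ∏ i, μi i (D i)) G₁ a₁ *
          hsDiv ε (pushKer (condProd μi j v) (G₂ a₁)) (pushKer (condProd μi j w) (G₂ a₁)) := by
  have hj₁ : j ∉ τ₁ := disjoint_right.mp hdisj hj
  have hjoint : ∀ u a₁ a₂, ∑ D : Fin n → W, condProd μi j u D * (G₁ D a₁ * G₂ a₁ D a₂)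
      = pushKer (fun D : Fin n → W => ∏ i, μi i (D i)) G₁ a₁ *
          pushKer (condProd μi j u) (G₂ a₁) a₂ := by
    intro u a₁ a₂
    have hmass : ∀ i, ∑ x, update μi j (Pi.single u 1) i x = 1 := fun i => by
      by_cases hi : i = j <;> simp [hi, (hμi i).2]
    have hκ : τ₁.piecewise μi (update μi j (Pi.single u 1)) = update μi j (Pi.single u 1) :=
      funext fun i => by
        by_cases hi : i ∈ τ₁
        · simp [hi, update_of_ne (ne_of_mem_of_not_mem hi hj₁)]
        · simp [hi]
    simp only [pushKer, condProd_eq_prod_update]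
    rw [sum_prod_mul_sum_prod_of_dependsOn _ _ τ₁ (fun i _ => (hμi i).2) (fun i _ => hmass i)
      (fun D D' h => congrFun (hdep₁ D D' h) a₁)
      (fun D D' h => congrFun (hdep₂ a₁ D D' fun i hi => h i (disjoint_right.mp hdisj hi)) a₂), hκ]
  have hP : ∀ a₁, 0 ≤ pushKer (fun D : Fin n → W => ∏ i, μi i (D i)) G₁ a₁ := fun a₁ =>
    sum_nonneg fun D _ => mul_nonneg (prod_nonneg fun i _ => (hμi i).1 _) ((hG₁ D).1 a₁)
  simp only [hjoint]
  exact (hsDiv_mul_fiberwise ε hP (fun a₁ => pushKer (condProd μi j v) (G₂ a₁))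
    (fun a₁ => pushKer (condProd μi j w) (G₂ a₁))).le

theorem adaptive_two_round_fixed_template_bound
    {W A : Type*} [Fintype W] [DecidableEq W] [Fintype A]
    {n : ℕ}
    (μi : Fin n → W → ℝ) (hμi : ∀ i, IsPMF (μi i))
    (τ₁ τ₂ : Finset (Fin n)) (hdisj : Disjoint τ₁ τ₂)
    (j : Fin n) (hj : j ∈ τ₂)
    (G₁ : (Fin n → W) → A → ℝ) (hG₁ : ∀ D, IsPMF (G₁ D))
    (hdep₁ : ∀ (D D' : Fin n → W), (∀ i ∈ τ₁, D i = D' i) → G₁ D = G₁ D')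
    (G₂ : A → (Fin n → W) → A → ℝ) (hG₂ : ∀ a₁ D, IsPMF (G₂ a₁ D))
    (hdep₂ : ∀ (a₁ : A) (D D' : Fin n → W), (∀ i ∈ τ₂, D i = D' i) → G₂ a₁ D = G₂ a₁ D')
    (v w : W) (ε : ℝ) (hε : 0 ≤ ε) :
    hsDiv ε
      (fun p : A × A => ∑ D : Fin n → W, condProd μi j v D * (G₁ D p.1 * G₂ p.1 D p.2))
      (fun p : A × A => ∑ D : Fin n → W, condProd μi j w D * (G₁ D p.1 * G₂ p.1 D p.2))
      ≤ ∑ a₁ : A, pushKer (fun D : Fin n → W => ∏ i, μi i (D i)) G₁ a₁ *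
          hsDiv ε (pushKer (condProd μi j v) (G₂ a₁)) (pushKer (condProd μi j w) (G₂ a₁)) :=
  adaptive_two_round_fixed_template_bound_general μi hμi τ₁ τ₂ hdisj j hj G₁ hG₁ hdep₁ G₂ hdep₂ v w
    ε
end
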